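/- Let d ≥ 1 be an integer, let {U_i}_{i=1}^∞ be a collection of boxes in ℝ^d with pairwise disjoint interiors, let h : ℝ^d → ℝ be a Lipschitz function and let σ > 0. Then there exists a Lipschitz function ĥ : ℝ^d → ℝ such that sup_{x ∈ ℝ^d} |ĥ(x) − h(x)| ≤ σ and Lip(ĥ) ≤ Lip(h) + σ, ĥ is differentiable at every point of ⋃_{i=1}^∞ Int(U_i), and ĥ(x) = h(x) for all x ∈ ℝ^d \ ⋃_{i=1}^∞ Int(U_i). -/

import Mathlib

open Metric Set Filter

/-- A set `S ⊆ ℝ^d` is a universal differentiability set (UDS) if every Lipschitz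
function `f : ℝ^d → ℝ` is differentiable at at least one point of `S`. -/
def IsUDS (d : ℕ) (S : Set (EuclideanSpace ℝ (Fin d))) : Prop :=
  ∀ f : EuclideanSpace ℝ (Fin d) → ℝ, (∃ K : NNReal, LipschitzWith K f) →
    ∃ x ∈ S, DifferentiableAt ℝ f x

/-- The kernel `K(S) = S \ {x ∈ S : ∃ ε > 0, B(x,ε) ∩ S is a non-UDS}`. -/
def kernelUDS (d : ℕ) (S : Set (EuclideanSpace ℝ (Fin d))) :
    Set (EuclideanSpace ℝ (Fin d)) :=
  S \ {x | x ∈ S ∧ ∃ ε > 0, ¬ IsUDS d (Metric.ball x ε ∩ S)}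

/-- A box in `ℝ^d` is a product of closed bounded intervals. -/
def IsBox (d : ℕ) (U : Set (EuclideanSpace ℝ (Fin d))) : Prop :=
  ∃ a b : Fin d → ℝ,
    U = {x : EuclideanSpace ℝ (Fin d) | ∀ i, x i ∈ Set.Icc (a i) (b i)}

/-- Distance between two sets, with the convention `dist(A, ∅) = 1`. -/
noncomputable def setDist {α : Type*} [PseudoMetricSpace α] (A B : Set α) : ℝ :=
  haveI := Classical.propDecidable B.Nonempty
  if B.Nonempty then sInf {r : ℝ | ∃ a ∈ A, ∃ b ∈ B, r = dist a b} else 1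

/-- The smallest Lipschitz constant of `f`. -/
noncomputable def lipConst {α : Type*} [PseudoMetricSpace α] (f : α → ℝ) : NNReal :=
  sInf {K : NNReal | LipschitzWith K f}

/-!
Mollify `h` at a scale that varies with the point: `ĥ x = ∫ φ u * h (x - δ x • u) du`, where `φ` is
a normalized bump on the unit ball and `δ ≥ 0` is a `C¹` function that is positive exactly on the
open set `Ω = ⋃ Int Uᵢ`, bounded by `ε` and `ε`-Lipschitz; such a `δ` is a series of countably
many rescaled bumps covering `Ω`. Then `ĥ = h` where `δ = 0`, and `|ĥ - h| ≤ Lip(h) δ`. Since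
`x ↦ x - δ x • u` is `(1 + ε)`-Lipschitz for `‖u‖ ≤ 1`, `Lip(ĥ) ≤ Lip(h) (1 + ε)`. Where `δ > 0`,
the substitution `w = δ x • u` turns `ĥ x` into the convolution of `h` with a kernel that depends
in a `C¹` way on `x`, so `ĥ` is `C¹` on `Ω`.
-/

open Function MeasureTheory
open scoped NNReal ContDiff Convolution

section LipConst

variable {α : Type*} [PseudoMetricSpace α] {f : α → ℝ}

lemma lipConst_le {K : ℝ≥0} (hf : LipschitzWith K f) : lipConst f ≤ K :=
  csInf_le (OrderBot.bddBelow _) hf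

lemma lipschitzWith_lipConst (hf : ∃ K, LipschitzWith K f) : LipschitzWith (lipConst f) f := by
  have hclosed : IsClosed {K : ℝ≥0 | LipschitzWith K f} := by
    simp only [lipschitzWith_iff_dist_le_mul, ofPred_forall]
    exact isClosed_iInter fun x => isClosed_iInter fun y =>
      isClosed_le continuous_const (NNReal.continuous_coe.mul continuous_const)
  exact hclosed.csInf_mem hf (OrderBot.bddBelow _)

end LipConst

lemma LipschitzWith.tsum {ι α F : Type*} [PseudoMetricSpace α] [NormedAddCommGroup F]
    {f : ι → α → F} {K : ι → ℝ≥0} (hf : ∀ i, LipschitzWith (K i) (f i)) (hK : Summable K)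
    (hsum : ∀ x, Summable fun i => f i x) :
    LipschitzWith (∑' i, K i) fun x => ∑' i, f i x := by
  have hK' : Summable fun i => (K i : ℝ) := NNReal.summable_coe.2 hK
  refine LipschitzWith.of_dist_le_mul fun x y => ?_
  have hbound : ∀ i, ‖f i x - f i y‖ ≤ K i * dist x y := fun i => by
    rw [← dist_eq_norm]; exact (hf i).dist_le_mul x y
  have hnorm : Summable fun i => ‖f i x - f i y‖ :=
    (hK'.mul_right _).of_nonneg_of_le (fun _ => norm_nonneg _) hbound
  calc dist (∑' i, f i x) (∑' i, f i y) = ‖∑' i, (f i x - f i y)‖ := by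
        rw [dist_eq_norm, (hsum x).tsum_sub (hsum y)]
    _ ≤ ∑' i, ‖f i x - f i y‖ := norm_tsum_le_tsum_norm hnorm
    _ ≤ ∑' i, K i * dist x y := hnorm.tsum_le_tsum hbound (hK'.mul_right _)
    _ = (∑' i, K i : ℝ≥0) * dist x y := by rw [tsum_mul_right, NNReal.coe_tsum]

lemma support_tsum_of_nonneg {ι α : Type*} {f : ι → α → ℝ} (hf : ∀ i x, 0 ≤ f i x)
    (hsum : ∀ x, Summable fun i => f i x) :
    support (fun x => ∑' i, f i x) = ⋃ i, support (f i) := by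
  ext x
  simp only [mem_support, mem_iUnion, ne_eq, ← not_forall]
  rw [← (hsum x).hasSum_iff, hasSum_zero_iff_of_nonneg (hf · x), funext_iff]
  rfl

section SmoothCutoff

universe u

variable {E : Type u} [NormedAddCommGroup E] [NormedSpace ℝ E]

lemma ContDiff.exists_bound_iteratedFDeriv {F : Type*} [NormedAddCommGroup F]
    [NormedSpace ℝ F] {f : E → F} (hf : ContDiff ℝ ∞ f) (hc : HasCompactSupport f) (n : ℕ) :
    ∃ C, ∀ k ≤ n, ∀ x, ‖iteratedFDeriv ℝ k f x‖ ≤ C := by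
  have (k : ℕ) : ∃ C, ∀ x, ‖iteratedFDeriv ℝ k f x‖ ≤ C :=
    (hc.iteratedFDeriv k).exists_bound_of_continuous
      (hf.continuous_iteratedFDeriv (by exact_mod_cast le_top))
  choose C hC using this
  refine ⟨∑ j ∈ Finset.range (n + 1), C j, fun k hk x => (hC k x).trans ?_⟩
  exact Finset.single_le_sum (fun j _ => (norm_nonneg _).trans (hC j 0))
    (Finset.mem_range.2 (Nat.lt_succ_of_le hk))

lemma ContDiff.exists_pos_norm_iteratedFDeriv_smul_le {F : Type*} [NormedAddCommGroup F]
    [NormedSpace ℝ F] {f : E → F} (hf : ContDiff ℝ ∞ f) (hc : HasCompactSupport f) (n : ℕ)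
    {w : ℝ} (hw : 0 < w) : ∃ r : ℝ, 0 < r ∧ ∀ k ≤ n, ∀ x, ‖iteratedFDeriv ℝ k (r • f) x‖ ≤ w := by
  obtain ⟨C, hC⟩ := hf.exists_bound_iteratedFDeriv hc n
  have hC1 : 0 < C + 1 := by linarith [(norm_nonneg _).trans (hC 0 (Nat.zero_le _) 0)]
  refine ⟨w / (C + 1), by positivity, fun k hk x => ?_⟩
  rw [iteratedFDeriv_const_smul_apply (hf.contDiffAt.of_le (by exact_mod_cast le_top)),
    norm_smul, Real.norm_of_nonneg (by positivity)]
  calc w / (C + 1) * ‖iteratedFDeriv ℝ k f x‖ ≤ w / (C + 1) * (C + 1) := by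
        gcongr; linarith [hC k hk x]
    _ = w := div_mul_cancel₀ w hC1.ne'

variable [FiniteDimensional ℝ E]

lemma IsOpen.exists_countable_contDiff_cover {s : Set E} (hs : IsOpen s) :
    ∃ (ι : Type u) (_ : Countable ι) (g : ι → E → ℝ), (∀ i, ContDiff ℝ ∞ (g i)) ∧
      (∀ i, HasCompactSupport (g i)) ∧ (∀ i, range (g i) ⊆ Icc 0 1) ∧
      ⋃ i, support (g i) = s := by
  have (x : s) : ∃ g : E → ℝ, tsupport g ⊆ s ∧ HasCompactSupport g ∧ ContDiff ℝ ∞ g ∧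
      range g ⊆ Icc 0 1 ∧ g x = 1 :=
    exists_contDiff_tsupport_subset (hs.mem_nhds x.2)
  choose g hg_supp hg_comp hg_smooth hg_range hg_one using this
  have hcover : ⋃ x, support (g x) = s := by
    refine (iUnion_subset fun x => (subset_tsupport _).trans (hg_supp x)).antisymm ?_
    intro x hx
    exact mem_iUnion.2 ⟨⟨x, hx⟩, by simp [hg_one]⟩
  obtain ⟨T, hT, hTcover⟩ := TopologicalSpace.isOpen_iUnion_countable (fun x => support (g x))
    fun x => (hg_smooth x).continuous.isOpen_support
  refine ⟨T, hT.to_subtype, fun x => g x, fun x => hg_smooth x, fun x => hg_comp x,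
    fun x => hg_range x, ?_⟩
  exact (biUnion_eq_iUnion _ _).symm.trans (hTcover.trans hcover)

lemma IsOpen.exists_contDiff_lipschitzWith_support_eq {s : Set E} (hs : IsOpen s) {ε : ℝ≥0}
    (hε : ε ≠ 0) :
    ∃ δ : E → ℝ, ContDiff ℝ 1 δ ∧ support δ = s ∧ range δ ⊆ Icc 0 ε ∧ LipschitzWith ε δ := by
  obtain ⟨ι, _, g, hg_smooth, hg_comp, hg_range, hg_cover⟩ := hs.exists_countable_contDiff_cover
  obtain ⟨w, hw_pos, c, hw_sum, hcε⟩ := NNReal.exists_pos_sum_of_countable hε ι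
  have (i : ι) := (hg_smooth i).exists_pos_norm_iteratedFDeriv_smul_le (hg_comp i) 1 (hw_pos i)
  choose r hr_pos hf_bound using this
  set f : ι → E → ℝ := fun i => r i • g i
  have hf_smooth (i : ι) : ContDiff ℝ 1 (f i) := ((hg_smooth i).const_smul (r i)).of_le (by simp)
  have hf_nonneg (i : ι) (x : E) : 0 ≤ f i x :=
    mul_nonneg (hr_pos i).le (hg_range i (mem_range_self x)).1
  have hf_le (i : ι) (x : E) : f i x ≤ w i := by
    have := hf_bound i 0 (Nat.zero_le _) x
    rw [norm_iteratedFDeriv_zero, Real.norm_eq_abs] at this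
    exact (le_abs_self _).trans this
  have hw : Summable fun i => (w i : ℝ) := NNReal.summable_coe.2 hw_sum.summable
  have hsum (x : E) : Summable fun i => f i x :=
    hw.of_nonneg_of_le (fun i => hf_nonneg i x) (fun i => hf_le i x)
  have hf_lip (i : ι) : LipschitzWith (w i) (f i) := by
    refine lipschitzWith_of_nnnorm_fderiv_le ((hf_smooth i).differentiable one_ne_zero) fun x => ?_
    rw [← NNReal.coe_le_coe, coe_nnnorm, ← norm_iteratedFDeriv_one]
    exact hf_bound i 1 le_rfl x
  refine ⟨fun x => ∑' i, f i x, ?_, ?_, ?_, ?_⟩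
  · exact contDiff_tsum hf_smooth (v := fun _ i => (w i : ℝ)) (fun _ _ => hw)
      fun k i x hk => hf_bound i k (mod_cast hk) x
  · rw [support_tsum_of_nonneg hf_nonneg hsum, ← hg_cover]
    exact iUnion_congr fun i => support_const_smul_of_ne_zero _ _ (hr_pos i).ne'
  · rintro _ ⟨x, rfl⟩
    refine ⟨tsum_nonneg fun i => hf_nonneg i x, ?_⟩
    calc ∑' i, f i x ≤ ∑' i, (w i : ℝ) := (hsum x).tsum_le_tsum (fun i => hf_le i x) hw
      _ ≤ ε := by rw [← NNReal.coe_tsum, hw_sum.tsum_eq]; exact_mod_cast hcε.le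
  · refine (LipschitzWith.tsum hf_lip hw_sum.summable hsum).weaken ?_
    rw [hw_sum.tsum_eq]
    exact hcε.le

end SmoothCutoff

section VariableMollifier

variable {E : Type*} [NormedAddCommGroup E] [NormedSpace ℝ E] [FiniteDimensional ℝ E]
  [MeasurableSpace E] [BorelSpace E] (μ : Measure E) [μ.IsAddHaarMeasure]

noncomputable def unitBump : ContDiffBump (0 : E) := ⟨1 / 2, 1, by norm_num, by norm_num⟩

noncomputable def varMollify (δ h : E → ℝ) (x : E) : ℝ :=
  ∫ u, unitBump.normed μ u * h (x - δ x • u) ∂μ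

lemma integral_unitBump_mul_const (a : ℝ) : ∫ u, unitBump.normed μ u * a ∂μ = a := by
  rw [integral_mul_const, ContDiffBump.integral_normed, one_mul]

lemma support_unitBump_normed : support (unitBump.normed μ) = ball (0 : E) 1 :=
  ContDiffBump.support_normed_eq _

lemma varMollify_of_eq_zero {δ : E → ℝ} (h : E → ℝ) {x : E} (hx : δ x = 0) :
    varMollify μ δ h x = h x := by
  simp [varMollify, hx, integral_unitBump_mul_const]

lemma abs_integral_unitBump_mul_sub_le {h : E → ℝ} {L : ℝ≥0} (hh : LipschitzWith L h)
    {F G : E → E} (hF : Continuous F) (hG : Continuous G) {D : ℝ}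
    (hFG : ∀ u ∈ ball (0 : E) 1, dist (F u) (G u) ≤ D) :
    |∫ u, unitBump.normed μ u * h (F u) ∂μ - ∫ u, unitBump.normed μ u * h (G u) ∂μ| ≤ L * D := by
  have hint {F : E → E} (hF : Continuous F) :
      Integrable (fun u => unitBump.normed μ u * h (F u)) μ :=
    (unitBump.continuous_normed.mul (hh.continuous.comp hF)).integrable_of_hasCompactSupport
      unitBump.hasCompactSupport_normed.mul_right
  rw [← integral_sub (hint hF) (hint hG), ← integral_unitBump_mul_const μ (L * D),
    ← Real.norm_eq_abs]
  refine norm_integral_le_of_norm_le (unitBump.integrable_normed.mul_const _)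
    (Eventually.of_forall fun u => ?_)
  rw [← mul_sub, norm_mul, Real.norm_of_nonneg (unitBump.nonneg_normed u), ← dist_eq_norm]
  by_cases hu : u ∈ ball (0 : E) 1
  · exact mul_le_mul_of_nonneg_left ((hh.dist_le_mul _ _).trans
      (mul_le_mul_of_nonneg_left (hFG u hu) L.coe_nonneg)) (unitBump.nonneg_normed u)
  · rw [← support_unitBump_normed μ] at hu
    simp [notMem_support.1 hu]

lemma abs_varMollify_sub_le {h : E → ℝ} {L : ℝ≥0} (hh : LipschitzWith L h) (δ : E → ℝ) (x : E) :
    |varMollify μ δ h x - h x| ≤ L * |δ x| := by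
  conv_lhs => rw [← integral_unitBump_mul_const μ (h x)]
  refine abs_integral_unitBump_mul_sub_le μ hh (by fun_prop) continuous_const fun u hu => ?_
  rw [dist_eq_norm, sub_sub_cancel_left, norm_neg, norm_smul, Real.norm_eq_abs]
  exact mul_le_of_le_one_right (abs_nonneg _) (mem_ball_zero_iff.1 hu).le

lemma lipschitzWith_varMollify {h δ : E → ℝ} {L K : ℝ≥0} (hh : LipschitzWith L h)
    (hδ : LipschitzWith K δ) : LipschitzWith (L * (1 + K)) (varMollify μ δ h) := by
  refine LipschitzWith.of_dist_le_mul fun x y => ?_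
  rw [Real.dist_eq, NNReal.coe_mul, mul_assoc]
  refine abs_integral_unitBump_mul_sub_le μ hh (by fun_prop) (by fun_prop) fun u hu => ?_
  have hu : ‖u‖ ≤ 1 := (mem_ball_zero_iff.1 hu).le
  calc dist (x - δ x • u) (y - δ y • u) = ‖(x - y) - (δ x - δ y) • u‖ := by
        rw [dist_eq_norm, sub_smul]; abel_nf
    _ ≤ ‖x - y‖ + |δ x - δ y| * ‖u‖ := by
        rw [← Real.norm_eq_abs, ← norm_smul]; exact norm_sub_le _ _
    _ ≤ dist x y + K * dist x y := by
        rw [← dist_eq_norm, ← Real.dist_eq]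
        gcongr _ + ?_
        exact (mul_le_of_le_one_right dist_nonneg hu).trans (hδ.dist_le_mul x y)
    _ = ((1 + K : ℝ≥0) : ℝ) * dist x y := by push_cast; ring

lemma integral_mul_comp_sub_smul_eq_convolution (φ h : E → ℝ) (x : E) {c : ℝ} (hc : 0 < c) :
    ∫ u, φ u * h (x - c • u) ∂μ =
      (h ⋆[ContinuousLinearMap.mul ℝ ℝ, μ] fun z => c⁻¹ ^ Module.finrank ℝ E * φ (c⁻¹ • z)) x := by
  calc ∫ u, φ u * h (x - c • u) ∂μ = ∫ u, (fun w => φ (c⁻¹ • w) * h (x - w)) (c • u) ∂μ := by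
        simp [smul_smul, inv_mul_cancel₀ hc.ne']
    _ = |(c ^ Module.finrank ℝ E)⁻¹| • ∫ w, φ (c⁻¹ • w) * h (x - w) ∂μ :=
        Measure.integral_comp_smul μ (fun w => φ (c⁻¹ • w) * h (x - w)) c
    _ = ∫ w, h (x - w) * (c⁻¹ ^ Module.finrank ℝ E * φ (c⁻¹ • w)) ∂μ := by
        rw [abs_of_pos (by positivity), ← inv_pow, smul_eq_mul, ← integral_const_mul]
        congr 1; ext w; ring
    _ = _ := by
        rw [convolution_def, ← integral_sub_left_eq_self _ μ x]
        simp

theorem contDiffOn_varMollify {δ h : E → ℝ} {n : ℕ∞} {s : Set E} (hs : IsOpen s)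
    (hδ : ContDiffOn ℝ n δ s) (hδ_pos : ∀ x ∈ s, 0 < δ x) (hh : LocallyIntegrable h μ) :
    ContDiffOn ℝ n (varMollify μ δ h) s := by
  refine contDiffOn_of_locally_contDiffOn fun x hx => ?_
  -- On `t` the kernels below all vanish outside the fixed compact set `closedBall 0 (δ x + 1)`.
  set t := s ∩ δ ⁻¹' Iio (δ x + 1)
  have ht : IsOpen t := hδ.continuousOn.isOpen_inter_preimage hs isOpen_Iio
  set g : E → E → ℝ := fun p z => (δ p)⁻¹ ^ Module.finrank ℝ E * unitBump.normed μ ((δ p)⁻¹ • z)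
  have hg_supp (p z : E) (hp : p ∈ t) (hz : z ∉ closedBall (0 : E) (δ x + 1)) : g p z = 0 := by
    have hpos := hδ_pos p hp.1
    have : (δ p)⁻¹ • z ∉ support (unitBump.normed μ) := by
      rw [support_unitBump_normed, mem_ball_zero_iff, norm_smul,
        Real.norm_of_nonneg (inv_nonneg.2 hpos.le), not_lt, ← div_eq_inv_mul, one_le_div hpos]
      exact hp.2.le.trans (not_le.1 (mt mem_closedBall_zero_iff.2 hz)).le
    simp [g, notMem_support.1 this]
  have hg_smooth : ContDiffOn ℝ n (uncurry g) (t ×ˢ univ) := by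
    have hinv : ContDiffOn ℝ n (fun q : E × E => (δ q.1)⁻¹) (t ×ˢ univ) :=
      ((hδ.mono inter_subset_left).comp contDiffOn_fst fun q hq => hq.1).inv
        fun q hq => (hδ_pos q.1 hq.1.1).ne'
    exact (hinv.pow _).mul (unitBump.contDiff_normed.comp_contDiffOn (hinv.smul contDiffOn_snd))
  refine ⟨t, ht, ⟨hx, lt_add_one (δ x)⟩, ?_⟩
  refine ((contDiffOn_convolution_right_with_param_comp (ContinuousLinearMap.mul ℝ ℝ)
    contDiffOn_id ht (isCompact_closedBall 0 (δ x + 1)) hg_supp hh hg_smooth).congr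
      fun p hp => ?_).mono inter_subset_right
  exact integral_mul_comp_sub_smul_eq_convolution μ _ h p (hδ_pos p hp.1)

end VariableMollifier

theorem stmt_11_general (d : ℕ)
    (U : ℕ → Set (EuclideanSpace ℝ (Fin d)))
    (h : EuclideanSpace ℝ (Fin d) → ℝ) (hh : ∃ K : NNReal, LipschitzWith K h)
    (σ : ℝ) (hσ : 0 < σ) :
    ∃ hhat : EuclideanSpace ℝ (Fin d) → ℝ,
      (∃ K : NNReal, LipschitzWith K hhat) ∧
      (∀ x, |hhat x - h x| ≤ σ) ∧
      (lipConst hhat : ℝ) ≤ (lipConst h : ℝ) + σ ∧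
      (∀ x ∈ ⋃ i, interior (U i), DifferentiableAt ℝ hhat x) ∧
      ∀ x ∉ ⋃ i, interior (U i), hhat x = h x := by
  set Ω := ⋃ i, interior (U i)
  have hΩ : IsOpen Ω := isOpen_iUnion fun i => isOpen_interior
  set L := lipConst h
  have hL : LipschitzWith L h := lipschitzWith_lipConst hh
  set ε : ℝ≥0 := σ.toNNReal / (L + 1)
  have hε : ε ≠ 0 := (div_pos (Real.toNNReal_pos.2 hσ) (add_pos_of_nonneg_of_pos L.2 one_pos)).ne'
  have hLε : (L : ℝ) * ε ≤ σ := by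
    rw [NNReal.coe_div, Real.coe_toNNReal σ hσ.le, mul_div_assoc', div_le_iff₀ (by positivity)]
    push_cast
    nlinarith
  obtain ⟨δ, hδ_smooth, hδ_supp, hδ_range, hδ_lip⟩ :=
    hΩ.exists_contDiff_lipschitzWith_support_eq hε
  have hδ_pos : ∀ x ∈ Ω, 0 < δ x := fun x hx =>
    (hδ_range (mem_range_self x)).1.lt_of_ne' (hδ_supp.symm ▸ hx : x ∈ support δ)
  have hlip := lipschitzWith_varMollify volume hL hδ_lip
  refine ⟨varMollify volume δ h, ⟨_, hlip⟩, fun x => ?_, ?_, fun x hx => ?_, fun x hx => ?_⟩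
  · have hδx := hδ_range (mem_range_self x)
    calc _ ≤ L * |δ x| := abs_varMollify_sub_le volume hL δ x
      _ ≤ L * ε := by rw [abs_of_nonneg hδx.1]; exact mul_le_mul_of_nonneg_left hδx.2 L.2
      _ ≤ σ := hLε
  · calc (lipConst _ : ℝ) ≤ L * (1 + ε) := by exact_mod_cast lipConst_le hlip
      _ ≤ L + σ := by linarith
  · have := contDiffOn_varMollify volume (n := 1) hΩ hδ_smooth.contDiffOn hδ_pos
      hL.continuous.locallyIntegrable
    exact (this.differentiableOn one_ne_zero x hx).differentiableAt (hΩ.mem_nhds hx)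
  · exact varMollify_of_eq_zero volume h (notMem_support.1 (hδ_supp.symm ▸ hx))

theorem stmt_11 (d : ℕ) (hd : 1 ≤ d)
    (U : ℕ → Set (EuclideanSpace ℝ (Fin d))) (hU : ∀ i, IsBox d (U i))
    (hdisj : Pairwise fun i j => Disjoint (interior (U i)) (interior (U j)))
    (h : EuclideanSpace ℝ (Fin d) → ℝ) (hh : ∃ K : NNReal, LipschitzWith K h)
    (σ : ℝ) (hσ : 0 < σ) :
    ∃ hhat : EuclideanSpace ℝ (Fin d) → ℝ,
      (∃ K : NNReal, LipschitzWith K hhat) ∧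
      (∀ x, |hhat x - h x| ≤ σ) ∧
      (lipConst hhat : ℝ) ≤ (lipConst h : ℝ) + σ ∧
      (∀ x ∈ ⋃ i, interior (U i), DifferentiableAt ℝ hhat x) ∧
      ∀ x ∉ ⋃ i, interior (U i), hhat x = h x :=
  stmt_11_general d U h hh σ hσ
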